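/- arXiv:2011.06972 — 3 statements merged into one kernel-verified Lean document; each statement's English description precedes it below -/
import Mathlib

section
/- There exists a function E, analytic on the half-plane {s : Re s > 1/2} and given there by the absolutely convergent series E(s) = ∑_{p prime} ( −log(1 − p^{−s}) − p^{−s} ), such that for every s with Re s > 1 one has log ζ(s) = ζ_ℙ(s) + E(s), where log ζ(s) denotes the branch given by ∑_{p prime} −log(1 − p^{−s}). -/
open Complex

private lemma pz_norm (p : Nat.Primes) (s : ℂ) :
    ‖((p : ℕ) : ℂ) ^ (-s)‖ = ((p : ℕ) : ℝ) ^ (-s.re) := by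
  rw [Complex.norm_natCast_cpow_of_pos p.prop.pos, neg_re]

private lemma pz_le (p : Nat.Primes) {s : ℂ} (hs : 1 / 2 < s.re) :
    ‖((p : ℕ) : ℂ) ^ (-s)‖ ≤ 3 / 4 := by
  rw [pz_norm]
  have hp2 : (2 : ℝ) ≤ ((p : ℕ) : ℝ) := by exact_mod_cast p.prop.two_le
  have h1 : ((p : ℕ) : ℝ) ^ (-s.re) ≤ ((p : ℕ) : ℝ) ^ (-(1/2) : ℝ) :=
    Real.rpow_le_rpow_of_exponent_le (by linarith) (by linarith)
  have h2 : ((p : ℕ) : ℝ) ^ (-(1/2) : ℝ) ≤ (2 : ℝ) ^ (-(1/2) : ℝ) := by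
    rw [Real.rpow_neg (by linarith), Real.rpow_neg (by norm_num)]
    refine inv_anti₀ (by positivity) ?_
    exact Real.rpow_le_rpow (by norm_num) hp2 (by norm_num)
  have hsq : ((2 : ℝ) ^ ((1/2) : ℝ)) ^ 2 = 2 := by
    rw [← Real.rpow_natCast ((2:ℝ) ^ ((1/2):ℝ)) 2, ← Real.rpow_mul (by norm_num)]
    norm_num
  have h3 : (4 : ℝ) / 3 ≤ (2 : ℝ) ^ ((1/2) : ℝ) := by
    nlinarith [Real.rpow_pos_of_pos (by norm_num : (0:ℝ) < 2) ((1/2) : ℝ)]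
  have h4 : (2 : ℝ) ^ (-(1/2) : ℝ) ≤ 3 / 4 := by
    rw [Real.rpow_neg (by norm_num)]
    rw [inv_le_comm₀ (by positivity) (by norm_num)]
    linarith
  linarith

private lemma pz_bound (p : Nat.Primes) {s : ℂ} (hs : 1 / 2 < s.re) :
    ‖-Complex.log (1 - ((p : ℕ) : ℂ) ^ (-s)) - ((p : ℕ) : ℂ) ^ (-s)‖
      ≤ 2 * ((p : ℕ) : ℝ) ^ (-2 * s.re) := by
  set z : ℂ := ((p : ℕ) : ℂ) ^ (-s) with hz
  have hle : ‖z‖ ≤ 3 / 4 := pz_le p hs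
  have hlt : ‖z‖ < 1 := lt_of_le_of_lt hle (by norm_num)
  have hsp : (1 : ℂ) - z ∈ Complex.slitPlane := by
    have := Complex.mem_slitPlane_of_norm_lt_one (z := -z) (by rwa [norm_neg])
    rwa [← sub_eq_add_neg] at this
  have hneg : -Complex.log (1 - z) = Complex.log (1 - z)⁻¹ :=
    (Complex.log_inv _ (Complex.slitPlane_arg_ne_pi hsp)).symm
  rw [hneg]
  calc ‖Complex.log (1 - z)⁻¹ - z‖ ≤ ‖z‖ ^ 2 * (1 - ‖z‖)⁻¹ / 2 :=
        Complex.norm_log_one_sub_inv_sub_self_le hlt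
    _ ≤ ‖z‖ ^ 2 * 4 / 2 := by
        have h4 : (1 - ‖z‖)⁻¹ ≤ 4 := by
          rw [inv_le_comm₀ (by linarith) (by norm_num)]; linarith
        gcongr
    _ = 2 * ‖z‖ ^ 2 := by ring
    _ = 2 * ((p : ℕ) : ℝ) ^ (-2 * s.re) := by
        rw [pz_norm, ← Real.rpow_natCast (((p : ℕ) : ℝ) ^ (-s.re)) 2,
          ← Real.rpow_mul (by positivity)]
        norm_num
        ring_nf

private lemma pz_summable {σ : ℝ} (hσ : 1 / 2 < σ) :
    Summable (fun p : Nat.Primes => 2 * ((p : ℕ) : ℝ) ^ (-2 * σ)) :=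
  (Nat.Primes.summable_rpow.mpr (by linarith)).mul_left 2

private lemma pz_diff (p : Nat.Primes) {σ : ℝ} (hσ : 1 / 2 < σ) :
    DifferentiableOn ℂ
      (fun s => -Complex.log (1 - ((p : ℕ) : ℂ) ^ (-s)) - ((p : ℕ) : ℂ) ^ (-s))
      {s : ℂ | σ < s.re} := by
  intro s hsmem
  have hs : 1 / 2 < s.re := lt_trans hσ hsmem
  have hp0 : ((p : ℕ) : ℂ) ≠ 0 := by
    exact_mod_cast p.prop.pos.ne'
  have hg : DifferentiableAt ℂ (fun s : ℂ => ((p : ℕ) : ℂ) ^ (-s)) s :=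
    (differentiableAt_id.neg).const_cpow (Or.inl hp0)
  have hsp : (1 : ℂ) - ((p : ℕ) : ℂ) ^ (-s) ∈ Complex.slitPlane := by
    have hlt : ‖-(((p : ℕ) : ℂ) ^ (-s))‖ < 1 := by
      rw [norm_neg]; exact lt_of_le_of_lt (pz_le p hs) (by norm_num)
    have := Complex.mem_slitPlane_of_norm_lt_one hlt
    rwa [← sub_eq_add_neg] at this
  exact (((differentiableAt_const (1:ℂ)).sub hg).clog hsp).neg.sub hg |>.differentiableWithinAt

/-- There exists a function `E`, analytic on the half-plane `{s : Re s > 1/2}` and given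
there by the absolutely convergent series `E(s) = ∑_{p prime} (−log(1 − p^{−s}) − p^{−s})`,
such that for every `s` with `Re s > 1`, `log ζ(s) = ζ_ℙ(s) + E(s)`, where `log ζ(s)`
denotes the branch given by `∑_{p prime} −log(1 − p^{−s})`. -/
theorem log_zeta_eq_primeZeta_add_analytic :
    ∃ E : ℂ → ℂ,
      AnalyticOnNhd ℂ E {s : ℂ | 1 / 2 < s.re} ∧
      (∀ s : ℂ, 1 / 2 < s.re →
        Summable (fun p : Nat.Primes =>
          ‖-Complex.log (1 - ((p : ℕ) : ℂ) ^ (-s)) - ((p : ℕ) : ℂ) ^ (-s)‖) ∧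
        HasSum (fun p : Nat.Primes =>
          -Complex.log (1 - ((p : ℕ) : ℂ) ^ (-s)) - ((p : ℕ) : ℂ) ^ (-s)) (E s)) ∧
      ∀ s : ℂ, 1 < s.re →
        (∑' p : Nat.Primes, -Complex.log (1 - ((p : ℕ) : ℂ) ^ (-s)))
          = (∑' p : Nat.Primes, ((p : ℕ) : ℂ) ^ (-s)) + E s := by
  set F : Nat.Primes → ℂ → ℂ :=
    fun p s => -Complex.log (1 - ((p : ℕ) : ℂ) ^ (-s)) - ((p : ℕ) : ℂ) ^ (-s) with hF
  set E : ℂ → ℂ := fun s => ∑' p : Nat.Primes, F p s with hE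
  have hsummable : ∀ s : ℂ, 1 / 2 < s.re → Summable (fun p : Nat.Primes => ‖F p s‖) := by
    intro s hs
    refine (pz_summable hs).of_nonneg_of_le (fun _ => norm_nonneg _) ?_
    · intro p
      have := pz_bound p hs
      -- exponent: here σ = s.re
      simpa using this
  refine ⟨E, ?_, ?_, ?_⟩
  · -- analytic
    refine DifferentiableOn.analyticOnNhd ?_ (isOpen_lt continuous_const Complex.continuous_re)
    intro s hsmem
    simp only [Set.mem_setOf_eq] at hsmem
    set σ : ℝ := (1 / 2 + s.re) / 2 with hσdef
    have hσ : 1 / 2 < σ := by simp only [hσdef]; linarith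
    have hsσ : σ < s.re := by simp only [hσdef]; linarith
    have hopen : IsOpen {t : ℂ | σ < t.re} := isOpen_lt continuous_const Complex.continuous_re
    have hdiff : DifferentiableOn ℂ E {t : ℂ | σ < t.re} := by
      refine differentiableOn_tsum_of_summable_norm (pz_summable hσ)
        (fun p => pz_diff p hσ) hopen ?_
      intro p w hw
      have hw' : 1 / 2 < w.re := lt_trans hσ hw
      refine le_trans (pz_bound p hw') ?_
      have hp1 : (1 : ℝ) ≤ ((p : ℕ) : ℝ) := by exact_mod_cast p.prop.one_lt.le
      gcongr 2 * ?_
      exact Real.rpow_le_rpow_of_exponent_le hp1 (by have hw2 : σ < w.re := hw; linarith)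
    exact (hdiff.differentiableAt (hopen.mem_nhds hsσ)).differentiableWithinAt
  · intro s hs
    exact ⟨hsummable s hs, ((hsummable s hs).of_norm).hasSum⟩
  · intro s hs
    have hs' : 1 / 2 < s.re := by linarith
    have h1 : Summable (fun p : Nat.Primes => ((p : ℕ) : ℂ) ^ (-s)) := by
      refine Summable.of_norm ?_
      have : Summable (fun p : Nat.Primes => ((p : ℕ) : ℝ) ^ (-s.re)) :=
        Nat.Primes.summable_rpow.mpr (by linarith)
      refine this.congr fun p => ?_
      exact (pz_norm p s).symm
    have h2 : Summable (fun p : Nat.Primes => F p s) := (hsummable s hs').of_norm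
    have key : ∀ p : Nat.Primes,
        -Complex.log (1 - ((p : ℕ) : ℂ) ^ (-s)) = F p s + ((p : ℕ) : ℂ) ^ (-s) := by
      intro p; simp [hF]
    calc (∑' p : Nat.Primes, -Complex.log (1 - ((p : ℕ) : ℂ) ^ (-s)))
        = ∑' p : Nat.Primes, (F p s + ((p : ℕ) : ℂ) ^ (-s)) := tsum_congr key
      _ = (∑' p : Nat.Primes, F p s) + ∑' p : Nat.Primes, ((p : ℕ) : ℂ) ^ (-s) :=
          Summable.tsum_add h2 h1
      _ = (∑' p : Nat.Primes, ((p : ℕ) : ℂ) ^ (-s)) + E s := by rw [hE]; ring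
end

section
/- (Wiener–Ikehara–Korevaar theorem, converse direction.) Let S : [0,∞) → ℝ be non-decreasing with Laplace transform 𝓛S(s) = ∫₀^∞ S(u)e^{−su} du converging for Re s > 1, let A ∈ ℝ, set g(s) = 𝓛S(s) − A/(s−1), and suppose lim_{u→∞} S(u)/e^u = A. Then the bounded measurable function v(x) = (S(x)e^{−x} − A)·𝟙_{x ≥ 0} satisfies v(x) → 0 as |x| → ∞, and for every smooth compactly supported φ : ℝ → ℂ, lim_{ε→0⁺} ∫_ℝ g(1+ε+it) φ(t) dt = ∫_ℝ v(x) φ̂(x) dx, where φ̂(x) = ∫_ℝ φ(t) e^{−ixt} dt; i.e., g extends to a pseudo-function on the line Re s = 1. -/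
open MeasureTheory Set Filter


lemma wik_cexp_integrableOn {c : ℂ} (hc : 0 < c.re) :
    IntegrableOn (fun u : ℝ => Complex.exp (-c * u)) (Ioi (0 : ℝ)) := by
  apply Integrable.mono' ((exp_neg_integrableOn_Ioi 0 hc))
  · exact (Complex.continuous_exp.comp (by continuity)).aestronglyMeasurable
  · filter_upwards with u
    rw [Complex.norm_exp]
    simp [neg_mul, Complex.mul_re]

lemma wik_integral_cexp {c : ℂ} (hc : 0 < c.re) :
    ∫ u in Ioi (0 : ℝ), Complex.exp (-c * u) = 1 / c := by
  have hc0 : c ≠ 0 := fun h => by simp [h] at hc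
  have h1 : Tendsto (fun b : ℝ => ∫ u in (0:ℝ)..b, Complex.exp (-c * u)) atTop
      (nhds (∫ u in Ioi (0 : ℝ), Complex.exp (-c * u))) :=
    intervalIntegral_tendsto_integral_Ioi 0 (wik_cexp_integrableOn hc) tendsto_id
  have h2 : Tendsto (fun b : ℝ => ∫ u in (0:ℝ)..b, Complex.exp (-c * u)) atTop
      (nhds (1 / c)) := by
    have heq : (fun b : ℝ => ∫ u in (0:ℝ)..b, Complex.exp (-c * u)) =
        fun b : ℝ => (Complex.exp (-c * b) - 1) / (-c) := by
      ext b
      rw [integral_exp_mul_complex (by simpa using hc0)]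
      simp
    rw [heq]
    have hto : Tendsto (fun b : ℝ => Complex.exp (-c * b)) atTop (nhds 0) := by
      rw [tendsto_zero_iff_norm_tendsto_zero]
      have : (fun b : ℝ => ‖Complex.exp (-c * b)‖) = fun b : ℝ => Real.exp (-c.re * b) := by
        ext b; rw [Complex.norm_exp]; simp [neg_mul, Complex.mul_re]
      rw [this]
      exact Real.tendsto_exp_atBot.comp (tendsto_id.const_mul_atTop_of_neg (neg_neg_iff_pos.mpr hc))
    have := (hto.sub_const 1).div_const (-c)
    simpa [neg_div, div_neg, zero_sub, neg_neg] using this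
  exact tendsto_nhds_unique h1 h2

noncomputable def wik_schwartz (φ : ℝ → ℂ) (h1 : ContDiff ℝ (⊤ : ℕ∞) φ) (h2 : HasCompactSupport φ) :
    SchwartzMap ℝ ℂ where
  toFun := φ
  smooth' := h1.of_le (by simp)
  decay' := by
    intro k n
    have hcs : HasCompactSupport fun x : ℝ => ‖x‖ ^ k * ‖iteratedFDeriv ℝ n φ x‖ := by
      apply HasCompactSupport.mul_left
      exact (h2.iteratedFDeriv n).norm
    have hcont : Continuous fun x : ℝ => ‖x‖ ^ k * ‖iteratedFDeriv ℝ n φ x‖ :=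
      ((continuous_norm).pow k).mul (h1.continuous_iteratedFDeriv (by exact_mod_cast le_top)).norm
    obtain ⟨C, hC⟩ := hcont.bounded_above_of_compact_support hcs
    refine ⟨C, fun x => ?_⟩
    have := hC x
    rwa [Real.norm_eq_abs, _root_.abs_of_nonneg (by positivity)] at this

lemma wik_phat (φ : ℝ → ℂ) (h1 : ContDiff ℝ (⊤ : ℕ∞) φ) (h2 : HasCompactSupport φ) :
    Integrable (fun x : ℝ => ∫ t : ℝ, φ t * Complex.exp (-Complex.I * x * t)) ∧
    Continuous (fun x : ℝ => ∫ t : ℝ, φ t * Complex.exp (-Complex.I * x * t)) := by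
  set ψ := wik_schwartz φ h1 h2
  have hψ : (ψ : ℝ → ℂ) = φ := rfl
  have key : ∀ x : ℝ, (∫ t : ℝ, φ t * Complex.exp (-Complex.I * x * t))
      = FourierTransform.fourier φ (x * (2 * Real.pi)⁻¹) := by
    intro x
    rw [Real.fourier_eq']
    congr 1
    ext t
    rw [smul_eq_mul, mul_comm]
    congr 1
    have hπ : (2 * Real.pi) ≠ 0 := by positivity
    congr 1
    erw [Real.inner_apply]
    push_cast
    have : ((2:ℂ) * Real.pi) ≠ 0 := by exact_mod_cast hπ
    field_simp [Real.inner_apply]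
  have hF : Integrable (FourierTransform.fourier φ) := by
    have := (SchwartzMap.fourierTransformCLM ℂ ψ).integrable (μ := volume)
    rwa [SchwartzMap.fourierTransformCLM_apply, SchwartzMap.fourier_coe, hψ] at this
  have hFc : Continuous (FourierTransform.fourier φ) := by
    have := (SchwartzMap.fourierTransformCLM ℂ ψ).continuous
    rwa [SchwartzMap.fourierTransformCLM_apply, SchwartzMap.fourier_coe, hψ] at this
  constructor
  · have := hF.comp_mul_right' (R := (2 * Real.pi)⁻¹)
      (by positivity)
    simp only [key]
    exact this
  · simp only [key]
    exact hFc.comp (continuous_id.mul continuous_const)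

/-- **Wiener–Ikehara–Korevaar theorem, converse direction.**
Let `S : [0,∞) → ℝ` be non-decreasing with Laplace transform converging for `Re s > 1`,
let `g(s) = 𝓛S(s) − A/(s−1)`, and suppose `S(u)/e^u → A`.  Then the bounded measurable
function `v(x) = (S(x)e^{−x} − A)·𝟙_{x ≥ 0}` vanishes at infinity and for every smooth
compactly supported `φ`,
`lim_{ε→0⁺} ∫ g(1+ε+it) φ(t) dt = ∫ v(x) φ̂(x) dx` (with `φ̂(x) = ∫ φ(t) e^{−ixt} dt`);
i.e. `g` extends to a pseudo-function on the line `Re s = 1`. -/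
theorem wiener_ikehara_korevaar_converse
    (S : ℝ → ℝ) (hmono : MonotoneOn S (Ici (0 : ℝ))) (A : ℝ)
    (hconv : ∀ s : ℂ, 1 < s.re →
      IntegrableOn (fun u : ℝ => (S u : ℂ) * Complex.exp (-s * u)) (Ioi 0))
    (g : ℂ → ℂ)
    (hg : ∀ s : ℂ, 1 < s.re →
      g s = (∫ u in Ioi (0 : ℝ), (S u : ℂ) * Complex.exp (-s * u)) - A / (s - 1))
    (hlim : Tendsto (fun u : ℝ => S u / Real.exp u) atTop (nhds A))
    (v : ℝ → ℂ)
    (hv : v = fun x : ℝ => if 0 ≤ x then ((S x * Real.exp (-x) - A : ℝ) : ℂ) else 0) :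
    (∃ C : ℝ, ∀ x : ℝ, ‖v x‖ ≤ C) ∧
    Tendsto v (cocompact ℝ) (nhds 0) ∧
    ∀ φ : ℝ → ℂ, ContDiff ℝ (⊤ : ℕ∞) φ → HasCompactSupport φ →
      Tendsto (fun ε : ℝ => ∫ t : ℝ, g (1 + ε + Complex.I * t) * φ t)
        (nhdsWithin 0 (Ioi 0))
        (nhds (∫ x : ℝ, v x * ∫ t : ℝ, φ t * Complex.exp (-Complex.I * x * t))) := by
  have hvpos : ∀ x : ℝ, 0 ≤ x → v x = ((S x * Real.exp (-x) - A : ℝ) : ℂ) := by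
    intro x hx; rw [hv]; simp [hx]
  have hvneg : ∀ x : ℝ, x < 0 → v x = 0 := by
    intro x hx; rw [hv]; simp [not_le.mpr hx]
  -- boundedness, with nonnegative constant
  obtain ⟨C, hC0, hC⟩ : ∃ C : ℝ, 0 ≤ C ∧ ∀ x : ℝ, ‖v x‖ ≤ C := by
    obtain ⟨M, hM⟩ := (Metric.tendsto_atTop.mp hlim) 1 one_pos
    set M' : ℝ := max M 0 with hM'
    refine ⟨|S 0| + |S M'| + |A| + 1, by positivity, fun x => ?_⟩
    rcases lt_or_ge x 0 with hx | hx
    · rw [hvneg x hx]; simp; positivity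
    · rw [hvpos x hx, Complex.norm_real, Real.norm_eq_abs]
      rcases le_or_gt x M' with hxM | hxM
      · have h1 : S 0 ≤ S x := hmono (le_refl 0 |> fun _ => mem_Ici.mpr le_rfl) (mem_Ici.mpr hx) hx
        have h2 : S x ≤ S M' := hmono (mem_Ici.mpr hx) (mem_Ici.mpr (le_max_right M 0)) hxM
        have hSx : |S x| ≤ |S 0| + |S M'| := by
          rw [abs_le]
          constructor
          · calc -(|S 0| + |S M'|) ≤ -|S 0| := by simp [abs_nonneg]
              _ ≤ S 0 := neg_abs_le _
              _ ≤ S x := h1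
          · calc S x ≤ S M' := h2
              _ ≤ |S M'| := le_abs_self _
              _ ≤ |S 0| + |S M'| := by simp [abs_nonneg]
        have hexp : Real.exp (-x) ≤ 1 := Real.exp_le_one_iff.mpr (by linarith)
        calc |S x * Real.exp (-x) - A| ≤ |S x * Real.exp (-x)| + |A| := abs_sub _ _
          _ = |S x| * Real.exp (-x) + |A| := by
              rw [abs_mul, abs_of_pos (Real.exp_pos _)]
          _ ≤ |S x| * 1 + |A| := by
              have := abs_nonneg (S x); nlinarith
          _ ≤ |S 0| + |S M'| + |A| + 1 := by linarith
      · have hxM2 : M ≤ x := le_trans (le_max_left M 0) hxM.le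
        have := hM x hxM2
        rw [Real.dist_eq] at this
        have heq : S x * Real.exp (-x) = S x / Real.exp x := by
          rw [Real.exp_neg]; ring
        rw [heq]
        have h1 : |S x / Real.exp x - A| ≤ 1 := this.le
        have := abs_nonneg (S 0); have := abs_nonneg (S M'); have := abs_nonneg A
        linarith
  refine ⟨⟨C, hC⟩, ?_, ?_⟩
  · -- vanishing at infinity
    rw [cocompact_eq_atBot_atTop, tendsto_sup]
    constructor
    · apply Tendsto.congr' _ tendsto_const_nhds
      filter_upwards [eventually_lt_atBot (0:ℝ)] with x hx
      exact (hvneg x hx).symm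
    · have h1 : Tendsto (fun x : ℝ => S x * Real.exp (-x) - A) atTop (nhds 0) := by
        have := hlim.sub_const A
        simp only [sub_self] at this
        refine this.congr (fun x => ?_)
        rw [Real.exp_neg]; ring
      have h2 : Tendsto (fun x : ℝ => ((S x * Real.exp (-x) - A : ℝ) : ℂ)) atTop (nhds 0) := by
        have := (Complex.continuous_ofReal.tendsto 0).comp h1
        simpa only [Function.comp_def, Complex.ofReal_zero] using this
      apply Tendsto.congr' _ h2
      filter_upwards [eventually_ge_atTop (0:ℝ)] with x hx
      exact (hvpos x hx).symm
  · -- the main statement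
    intro φ hφ1 hφ2
    obtain ⟨hPint, hPcont⟩ := wik_phat φ hφ1 hφ2
    set Phat : ℝ → ℂ := fun x => ∫ t : ℝ, φ t * Complex.exp (-Complex.I * x * t) with hPhat
    have hφint : Integrable φ := hφ1.continuous.integrable_of_hasCompactSupport hφ2
    -- measurability of v
    have hvmeas : AEStronglyMeasurable v volume := by
      have hS : AEMeasurable S (volume.restrict (Ici (0:ℝ))) :=
        aemeasurable_restrict_of_monotoneOn measurableSet_Ici hmono
      have h1 : AEStronglyMeasurable (fun x : ℝ => ((S x * Real.exp (-x) - A : ℝ) : ℂ))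
          (volume.restrict (Ici (0:ℝ))) :=
        (Complex.measurable_ofReal.comp_aemeasurable
          ((hS.mul (Real.measurable_exp.comp measurable_neg).aemeasurable).sub
            aemeasurable_const)).aestronglyMeasurable
      have hveq : v = Set.indicator (Ici (0:ℝ))
          (fun x : ℝ => ((S x * Real.exp (-x) - A : ℝ) : ℂ)) := by
        rw [hv]; ext x; by_cases h : 0 ≤ x <;> simp [Set.indicator_apply, h]
      rw [hveq, aestronglyMeasurable_indicator_iff measurableSet_Ici]
      exact h1
    -- Step A
    have hA : ∀ ε : ℝ, 0 < ε → ∀ t : ℝ, g (1 + ε + Complex.I * t) =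
        ∫ u in Ioi (0:ℝ), v u * Complex.exp (-((ε : ℂ) + Complex.I * t) * u) := by
      intro ε hε t
      set c : ℂ := (ε : ℂ) + Complex.I * t with hc
      have hcre : 0 < c.re := by simp [hc, hε]
      have hsre : (1 + (ε:ℂ) + Complex.I * t).re = 1 + ε := by simp
      rw [hg _ (by rw [hsre]; linarith)]
      have h1 : (1 + (ε:ℂ) + Complex.I * t) - 1 = c := by rw [hc]; ring
      rw [h1]
      have h2 : (A:ℂ) / c = ∫ u in Ioi (0:ℝ), (A:ℂ) * Complex.exp (-c * u) := by
        rw [integral_const_mul, wik_integral_cexp hcre]; ring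
      rw [h2, ← integral_sub (hconv _ (by rw [hsre]; linarith))
        ((wik_cexp_integrableOn hcre).const_mul _)]
      apply setIntegral_congr_fun measurableSet_Ioi
      intro u hu
      have hu0 : (0:ℝ) ≤ u := le_of_lt hu
      dsimp only
      rw [hvpos u hu0]
      push_cast
      rw [show -(1 + (ε:ℂ) + Complex.I * t) * u = (-u : ℝ) + (-c * u) by rw [hc]; push_cast; ring,
        Complex.exp_add]
      push_cast
      ring
    -- Step B
    have hB : ∀ ε : ℝ, 0 < ε → (∫ t : ℝ, g (1 + ε + Complex.I * t) * φ t) =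
        ∫ u : ℝ, v u * Complex.exp (-(ε:ℂ) * u) * Phat u := by
      intro ε hε
      have huncurry : Integrable (Function.uncurry fun (t u : ℝ) =>
          v u * Complex.exp (-((ε : ℂ) + Complex.I * t) * u) * φ t)
          (volume.prod (volume.restrict (Ioi 0))) := by
        apply Integrable.mono' (g := fun p : ℝ × ℝ => ‖φ p.1‖ * (C * Real.exp (-ε * p.2)))
        · exact hφint.norm.mul_prod ((exp_neg_integrableOn_Ioi 0 hε).const_mul C)
        · apply AEStronglyMeasurable.mul
          apply AEStronglyMeasurable.mul
          · exact (hvmeas.mono_measure Measure.restrict_le_self).comp_snd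
          · refine (Complex.continuous_exp.comp ?_).aestronglyMeasurable
            exact ((continuous_const.add (continuous_const.mul
              (Complex.continuous_ofReal.comp continuous_fst))).neg.mul
              (Complex.continuous_ofReal.comp continuous_snd))
          · exact (hφ1.continuous.comp continuous_fst).aestronglyMeasurable
        · filter_upwards with p
          have hnorm : ‖Complex.exp (-((ε : ℂ) + Complex.I * p.1) * p.2)‖
              = Real.exp (-ε * p.2) := by
            rw [Complex.norm_exp]
            congr 1
            simp [Complex.mul_re, Complex.add_re]
          rw [Function.uncurry_apply_pair, norm_mul, norm_mul, hnorm]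
          rcases lt_or_ge p.2 0 with h | h
          · rw [hvneg _ h]
            simp
            positivity
          · have h1 : ‖v p.2‖ ≤ C := hC _
            have h2 : ‖φ p.1‖ ≥ 0 := norm_nonneg _
            have h3 : (0:ℝ) < Real.exp (-ε * p.2) := Real.exp_pos _
            calc ‖v p.2‖ * Real.exp (-ε * p.2) * ‖φ p.1‖
                ≤ C * Real.exp (-ε * p.2) * ‖φ p.1‖ := by gcongr
              _ = ‖φ p.1‖ * (C * Real.exp (-ε * p.2)) := by ring
      calc (∫ t : ℝ, g (1 + ε + Complex.I * t) * φ t)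
          = ∫ t : ℝ, ∫ u in Ioi (0:ℝ),
              v u * Complex.exp (-((ε : ℂ) + Complex.I * t) * u) * φ t := by
            congr 1; ext t
            rw [hA ε hε t, ← integral_mul_const]
        _ = ∫ u in Ioi (0:ℝ), ∫ t : ℝ,
              v u * Complex.exp (-((ε : ℂ) + Complex.I * t) * u) * φ t :=
            integral_integral_swap huncurry
        _ = ∫ u in Ioi (0:ℝ), v u * Complex.exp (-(ε:ℂ) * u) * Phat u := by
            apply integral_congr_ae
            filter_upwards with u
            have : ∀ t : ℝ, v u * Complex.exp (-((ε : ℂ) + Complex.I * t) * u) * φ t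
                = (v u * Complex.exp (-(ε:ℂ) * u)) * (φ t * Complex.exp (-Complex.I * u * t)) := by
              intro t
              rw [show -((ε : ℂ) + Complex.I * t) * u = -(ε:ℂ) * u + -Complex.I * u * t by ring,
                Complex.exp_add]
              ring
            simp_rw [this]
            rw [integral_const_mul]
        _ = ∫ u : ℝ, v u * Complex.exp (-(ε:ℂ) * u) * Phat u := by
            rw [← integral_indicator measurableSet_Ioi]
            apply integral_congr_ae
            have h0 : ∀ᵐ u : ℝ, u ≠ (0:ℝ) := by
              rw [ae_iff]
              simp only [not_not]
              rw [show {a : ℝ | a = 0} = {(0:ℝ)} from Set.setOf_eq_eq_singleton]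
              exact measure_singleton 0
            filter_upwards [h0] with u hu
            rcases lt_trichotomy u 0 with h | h | h
            · rw [Set.indicator_of_notMem (by simpa using not_lt.mpr h.le), hvneg _ h]
              simp
            · exact absurd h hu
            · rw [Set.indicator_of_mem (mem_Ioi.mpr h)]
    -- Step C: dominated convergence
    have hmain : Tendsto (fun ε : ℝ => ∫ u : ℝ, v u * Complex.exp (-(ε:ℂ) * u) * Phat u)
        (nhdsWithin 0 (Ioi 0)) (nhds (∫ x : ℝ, v x * Phat x)) := by
      apply tendsto_integral_filter_of_dominated_convergence (fun u => C * ‖Phat u‖)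
      · filter_upwards with ε
        exact (hvmeas.mul
          (Complex.continuous_exp.comp
            ((continuous_const.mul Complex.continuous_ofReal))).aestronglyMeasurable).mul
          hPint.aestronglyMeasurable
      · filter_upwards [self_mem_nhdsWithin] with ε (hε : (0:ℝ) < ε)
        filter_upwards with u
        have hnorm : ‖Complex.exp (-(ε:ℂ) * u)‖ = Real.exp (-ε * u) := by
          rw [Complex.norm_exp]
          congr 1
          simp
        rw [norm_mul, norm_mul, hnorm]
        rcases lt_or_ge u 0 with h | h
        · rw [hvneg _ h]
          simp
          positivity
        · have h1 : Real.exp (-ε * u) ≤ 1 := Real.exp_le_one_iff.mpr (by nlinarith)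
          calc ‖v u‖ * Real.exp (-ε * u) * ‖Phat u‖
              ≤ C * 1 * ‖Phat u‖ := by gcongr; exact hC u
            _ = C * ‖Phat u‖ := by ring
      · exact hPint.norm.const_mul C
      · filter_upwards with u
        have hcont : Continuous fun ε : ℝ => v u * Complex.exp (-(ε:ℂ) * u) * Phat u := by
          apply Continuous.mul _ continuous_const
          exact continuous_const.mul (Complex.continuous_exp.comp
            (Complex.continuous_ofReal.neg.mul continuous_const))
        have := (hcont.tendsto 0).mono_left
          (nhdsWithin_le_nhds (a := (0:ℝ)) (s := Ioi (0:ℝ)))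
        simpa using this
    apply Tendsto.congr' _ hmain
    filter_upwards [self_mem_nhdsWithin] with ε (hε : (0:ℝ) < ε)
    exact (hB ε hε).symm
end

section
/- Let S : [0,∞) → ℝ be non-decreasing with S ≥ 0, and suppose the function g(u) = S(e^{|u|})/e^{|u|} is unbounded on ℝ. Then for every L > 0 and every Δu > 0 there exist, for each k ∈ ℕ, a point u_k → ∞ with g(u) ≥ k·e^{−Δu} for all u ∈ [u_k, u_k + Δu]; consequently, for every L > 0, sup_{n ∈ ℤ} (1/2π) ∫_ℝ g(u) · L · ( sin(uL/2) / (uL/2 − πn) )² du = ∞ (the integrals taken in the extended real sense). -/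
/-!
Monotonicity of `S` gives `g b ≥ e^{a - b} g a` for `0 ≤ a ≤ b`, so a large value of `g` persists,
damped by at most `e^{-Δ}`, over an interval of length `Δ`; since `g ≤ S(e^c)` on `[-c, c]`,
unboundedness forces such values arbitrarily far out. With `y = uL/2`, the Fejér factor
`(sin y / (y - πn))²` is at least `1/(2π²)` on the window `y - πn ∈ [π/4, 3π/4]`, of length `π/L`
in `u`, and `n` can be chosen to place this window inside any `u`-interval of length `4π/L`.
So `g ≥ c` on such an interval makes the `n`-th integral at least `c/(4π²)`.
-/

open MeasureTheory Set Filter Real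

section Growth

variable {S g : ℝ → ℝ}

lemma growth_nonneg (hpos : ∀ x : ℝ, 0 ≤ x → 0 ≤ S x)
    (hg : ∀ u : ℝ, g u = S (exp |u|) / exp |u|) (u : ℝ) : 0 ≤ g u := by
  rw [hg]
  exact div_nonneg (hpos _ (exp_pos _).le) (exp_pos _).le

lemma growth_mul_exp_sub_le (hmono : MonotoneOn S (Ici 0))
    (hg : ∀ u : ℝ, g u = S (exp |u|) / exp |u|) {a b : ℝ} (ha : 0 ≤ a) (hab : a ≤ b) :
    g a * exp (a - b) ≤ g b := by
  rw [hg, hg, abs_of_nonneg ha, abs_of_nonneg (ha.trans hab)]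
  calc S (exp a) / exp a * exp (a - b) = S (exp a) / exp b := by
        rw [exp_sub]; field_simp
    _ ≤ S (exp b) / exp b := by
        gcongr
        exact hmono (exp_pos a).le (exp_pos b).le (exp_le_exp.2 hab)

lemma exists_le_growth (hmono : MonotoneOn S (Ici 0)) (hpos : ∀ x : ℝ, 0 ≤ x → 0 ≤ S x)
    (hg : ∀ u : ℝ, g u = S (exp |u|) / exp |u|) (hunbdd : ¬ ∃ C : ℝ, ∀ u : ℝ, |g u| ≤ C)
    (c : ℝ) : ∃ u, c ≤ u ∧ c ≤ g u := by
  by_contra! h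
  refine hunbdd ⟨max c (S (exp c)), fun u => ?_⟩
  rw [abs_of_nonneg (growth_nonneg hpos hg u)]
  rcases le_or_gt c |u| with hcu | hcu
  · have hgu : g u = g |u| := by rw [hg, hg, abs_abs]
    exact le_max_of_le_left (hgu ▸ (h |u| hcu).le)
  · calc g u ≤ S (exp |u|) := by
          rw [hg]
          exact div_le_self (hpos _ (exp_pos _).le) (one_le_exp (abs_nonneg u))
      _ ≤ S (exp c) := hmono (exp_pos _).le (exp_pos _).le (exp_le_exp.2 hcu.le)
      _ ≤ _ := le_max_right _ _

lemma exists_forall_Icc_mul_exp_neg_le (hmono : MonotoneOn S (Ici 0))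
    (hpos : ∀ x : ℝ, 0 ≤ x → 0 ≤ S x) (hg : ∀ u : ℝ, g u = S (exp |u|) / exp |u|)
    (hunbdd : ¬ ∃ C : ℝ, ∀ u : ℝ, |g u| ≤ C) (c : ℝ) (hc : 0 ≤ c) (Δ : ℝ) :
    ∃ v, c ≤ v ∧ ∀ x ∈ Icc v (v + Δ), c * exp (-Δ) ≤ g x := by
  obtain ⟨v, hcv, hgv⟩ := exists_le_growth hmono hpos hg hunbdd c
  refine ⟨v, hcv, fun x hx => ?_⟩
  calc c * exp (-Δ) ≤ g v * exp (v - x) :=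
        mul_le_mul hgv (exp_le_exp.2 (by linarith [hx.2])) (exp_pos _).le (hc.trans hgv)
    _ ≤ g x := growth_mul_exp_sub_le hmono hg (hc.trans hcv) hx.1

end Growth

lemma sin_add_int_mul_pi_sq (x : ℝ) (n : ℤ) : sin (x + n * π) ^ 2 = sin x ^ 2 := by
  rw [sin_add_int_mul_pi, mul_pow, ← sq_abs ((-1 : ℝ) ^ n), abs_neg_one_zpow, one_pow, one_mul]

lemma half_le_sin_sq {t : ℝ} (ht : t ∈ Icc (π / 4) (3 * π / 4)) : 1 / 2 ≤ sin t ^ 2 := by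
  have : cos (2 * t) ≤ 0 :=
    cos_nonpos_of_pi_div_two_le_of_le (by linarith [ht.1]) (by linarith [ht.2])
  rw [sin_sq_eq_half_sub]
  linarith

lemma inv_two_mul_pi_sq_le_sin_div_sq {y : ℝ} {n : ℤ}
    (hy : y - π * n ∈ Icc (π / 4) (3 * π / 4)) :
    1 / (2 * π ^ 2) ≤ (sin y / (y - π * n)) ^ 2 := by
  have hsin : sin y ^ 2 = sin (y - π * n) ^ 2 := by
    rw [← sin_add_int_mul_pi_sq (y - π * n) n]
    ring_nf
  have hpos : 0 < y - π * n := by linarith [hy.1, pi_pos]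
  rw [div_pow, hsin, le_div_iff₀ (by positivity)]
  calc 1 / (2 * π ^ 2) * (y - π * n) ^ 2 ≤ 1 / (2 * π ^ 2) * π ^ 2 := by
        gcongr
        linarith [hy.2, pi_pos]
    _ = 1 / 2 := by field_simp
    _ ≤ _ := half_le_sin_sq hy

lemma exists_int_preimage_sub_mul_pi_Icc_subset (a : ℝ) :
    ∃ n : ℤ, (· - π * n) ⁻¹' Icc (π / 4) (3 * π / 4) ⊆ Icc a (a + 2 * π) := by
  refine ⟨⌈a / π⌉, fun y hy => ?_⟩
  have hlo : a ≤ π * ⌈a / π⌉ := (div_le_iff₀' pi_pos).1 (Int.le_ceil (a / π))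
  have hhi : π * ⌈a / π⌉ < a + π := by
    have := mul_lt_mul_of_pos_left (Int.ceil_lt_add_one (a / π)) pi_pos
    rwa [mul_add, mul_div_cancel₀ _ pi_pos.ne', mul_one] at this
  constructor <;> linarith [hy.1, hy.2, pi_pos]

lemma ofReal_div_le_lintegral_fejer {g : ℝ → ℝ} {L c : ℝ} (hL : 0 < L) (hc : 0 ≤ c) (n : ℤ)
    (hg : ∀ x, x * L / 2 - π * n ∈ Icc (π / 4) (3 * π / 4) → c ≤ g x) :
    ENNReal.ofReal (c / (4 * π ^ 2)) ≤ ∫⁻ x, ENNReal.ofReal ((1 / (2 * π)) *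
      (g x * L * (sin (x * L / 2) / (x * L / 2 - π * n)) ^ 2)) := by
  set s := Icc ((2 * π * n + π / 2) / L) ((2 * π * n + 3 * π / 2) / L)
  have hs : ∀ x ∈ s, x * L / 2 - π * n ∈ Icc (π / 4) (3 * π / 4) := by
    rintro x ⟨h1, h2⟩
    rw [div_le_iff₀ hL] at h1
    rw [le_div_iff₀ hL] at h2
    constructor <;> linarith
  calc ENNReal.ofReal (c / (4 * π ^ 2))
      = ENNReal.ofReal ((1 / (2 * π)) * (c * L * (1 / (2 * π ^ 2)))) * volume s := by
        rw [Real.volume_Icc, ← ENNReal.ofReal_mul (by positivity)]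
        congr 1
        field_simp
        ring
    _ = ∫⁻ _ in s, ENNReal.ofReal ((1 / (2 * π)) * (c * L * (1 / (2 * π ^ 2)))) :=
        (setLIntegral_const _ _).symm
    _ ≤ ∫⁻ x in s, ENNReal.ofReal ((1 / (2 * π)) *
          (g x * L * (sin (x * L / 2) / (x * L / 2 - π * n)) ^ 2)) := by
        refine setLIntegral_mono' measurableSet_Icc fun x hx => ENNReal.ofReal_le_ofReal ?_
        have hcg := hg x (hs x hx)
        gcongr
        · exact mul_nonneg (hc.trans hcg) hL.le
        · exact inv_two_mul_pi_sq_le_sin_div_sq (hs x hx)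
    _ ≤ _ := setLIntegral_le_lintegral _ _

lemma mem_Icc_of_mul_div_two_mem_Icc {L v x : ℝ} (hL : 0 < L)
    (hx : x * L / 2 ∈ Icc (v * L / 2) (v * L / 2 + 2 * π)) : x ∈ Icc v (v + 4 * π / L) := by
  constructor
  · exact le_of_mul_le_mul_right (by linarith [hx.1]) hL
  · rw [← sub_le_iff_le_add', le_div_iff₀ hL]
    linarith [hx.2]

theorem iSup_lintegral_fejer_eq_top {g : ℝ → ℝ} {L : ℝ} (hL : 0 < L)
    (hlarge : ∀ c, 0 ≤ c → ∃ v, ∀ x ∈ Icc v (v + 4 * π / L), c ≤ g x) :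
    (⨆ n : ℤ, ∫⁻ x, ENNReal.ofReal ((1 / (2 * π)) *
      (g x * L * (sin (x * L / 2) / (x * L / 2 - π * n)) ^ 2))) = ⊤ := by
  refine ENNReal.eq_top_of_forall_nnreal_le fun r => ?_
  obtain ⟨v, hv⟩ := hlarge (r * (4 * π ^ 2)) (by positivity)
  obtain ⟨n, hn⟩ := exists_int_preimage_sub_mul_pi_Icc_subset (v * L / 2)
  calc (r : ENNReal) = ENNReal.ofReal (r * (4 * π ^ 2) / (4 * π ^ 2)) := by
        rw [mul_div_cancel_right₀ _ (by positivity), ENNReal.ofReal_coe_nnreal]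
    _ ≤ _ := ofReal_div_le_lintegral_fejer hL (by positivity) n fun x hx =>
        hv x (mem_Icc_of_mul_div_two_mem_Icc hL (hn hx))
    _ ≤ _ := le_iSup (fun m : ℤ => ∫⁻ x, ENNReal.ofReal ((1 / (2 * π)) *
        (g x * L * (sin (x * L / 2) / (x * L / 2 - π * m)) ^ 2))) n

/-- Let `S : [0,∞) → ℝ` be non-decreasing and nonnegative, and suppose
`g(u) = S(e^{|u|})/e^{|u|}` is unbounded on `ℝ`.  Then for every `L > 0` and every
`Δu > 0` there exist points `u_k → ∞` with `g ≥ k·e^{−Δu}` on `[u_k, u_k + Δu]`;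
consequently, for every `L > 0`,
`sup_{n ∈ ℤ} (1/2π) ∫_ℝ g(u)·L·(sin(uL/2)/(uL/2 − πn))² du = ∞`
(the integrals taken in the extended real sense). -/
theorem fejer_coefficients_unbounded_of_unbounded
    (S : ℝ → ℝ) (hmono : MonotoneOn S (Ici (0 : ℝ))) (hpos : ∀ x : ℝ, 0 ≤ x → 0 ≤ S x)
    (g : ℝ → ℝ) (hg : ∀ u : ℝ, g u = S (Real.exp |u|) / Real.exp |u|)
    (hunbdd : ¬ ∃ C : ℝ, ∀ u : ℝ, |g u| ≤ C) :
    (∀ L : ℝ, 0 < L → ∀ Δu : ℝ, 0 < Δu →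
      ∃ u : ℕ → ℝ, Tendsto u atTop atTop ∧
        ∀ k : ℕ, ∀ x ∈ Icc (u k) (u k + Δu), (k : ℝ) * Real.exp (-Δu) ≤ g x) ∧
    (∀ L : ℝ, 0 < L →
      (⨆ n : ℤ, ∫⁻ u : ℝ, ENNReal.ofReal ((1 / (2 * Real.pi)) *
        (g u * L * (Real.sin (u * L / 2) / (u * L / 2 - Real.pi * n)) ^ 2))) = ⊤) := by
  have hlarge := exists_forall_Icc_mul_exp_neg_le hmono hpos hg hunbdd
  refine ⟨fun _ _ Δu _ => ?_, fun L hL => iSup_lintegral_fejer_eq_top hL fun c hc => ?_⟩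
  · choose u hcu hu using fun k : ℕ => hlarge k k.cast_nonneg Δu
    exact ⟨u, tendsto_atTop_mono hcu tendsto_natCast_atTop_atTop, hu⟩
  · obtain ⟨v, -, hv⟩ := hlarge (c * exp (4 * π / L)) (by positivity) (4 * π / L)
    refine ⟨v, fun x hx => ?_⟩
    simpa [mul_assoc, ← exp_add] using hv x hx
end
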